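/- Let g be a Lorentzian metric on E, l a null vector field, and X, Y vector fields that are nil-Killing with respect to l of order two, i.e. (L_X g)_x(w,v) = 0 and (L_Y g)_x(w,v) = 0 for every x ∈ E, every v ∈ E, and every w with g_x(l(x),w) = 0. Then [X,Y] is nil-Killing with respect to l, i.e. (L_{[X,Y]} g)_x is nilpotent with respect to l(x) at every x ∈ E. -/

import Mathlib

variable {E : Type*}

/-- The Lie bracket of two vector fields on a normed space:
`[X,Y](x) = (DY)_x(X x) - (DX)_x(Y x)`. -/
noncomputable def vfLieBracket [NormedAddCommGroup E] [NormedSpace ℝ E]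
    (X Y : E → E) : E → E :=
  fun x => fderiv ℝ Y x (X x) - fderiv ℝ X x (Y x)

/-- The Lie derivative of a smooth field of (continuous) bilinear forms `T` along a vector
field `X`: `(L_X T)_x (v, w) = (DT)_x(X x)(v, w) + T_x((DX)_x v, w) + T_x(v, (DX)_x w)`. -/
noncomputable def lieDerivSym [NormedAddCommGroup E] [NormedSpace ℝ E]
    (X : E → E) (T : E → (E →L[ℝ] E →L[ℝ] ℝ)) (x : E) :
    E →L[ℝ] E →L[ℝ] ℝ :=
  fderiv ℝ T x (X x) + (T x).comp (fderiv ℝ X x)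
    + ((ContinuousLinearMap.compL ℝ E E ℝ).flip (fderiv ℝ X x)).comp (T x)

/-- A bilinear form `B` is nilpotent with respect to a vector `v` (relative to the bilinear
form `gx`): `B(v, z) = 0` for all `z`, and `B(w, w') = 0` whenever `w, w' ⊥ v`. -/
def NilpotentWrt [NormedAddCommGroup E] [NormedSpace ℝ E]
    (gx B : E →L[ℝ] E →L[ℝ] ℝ) (v : E) : Prop :=
  (∀ z : E, B v z = 0) ∧
    ∀ w w' : E, gx v w = 0 → gx v w' = 0 → B w w' = 0

/-- A (continuous) bilinear form on `E` is (nondegenerate of) Lorentzian signature if it is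
diagonal `(-1, 1, …, 1)` with respect to some basis. -/
def IsLorentzianForm [NormedAddCommGroup E] [NormedSpace ℝ E]
    (B : E →L[ℝ] E →L[ℝ] ℝ) : Prop :=
  ∃ b : Module.Basis (Fin (Module.finrank ℝ E)) ℝ E,
    ∀ i j, B (b i) (b j) =
      if i = j then (if (i : ℕ) = 0 then (-1 : ℝ) else 1) else 0
section myaux
variable [NormedAddCommGroup E] [NormedSpace ℝ E] [FiniteDimensional ℝ E]
variable {g : E → (E →L[ℝ] E →L[ℝ] ℝ)} {l X Y V W : E → E}

open ContinuousLinearMap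
set_option linter.unusedSectionVars false

noncomputable instance instNACG3 : NormedAddCommGroup (E →L[ℝ] E →L[ℝ] E →L[ℝ] ℝ) :=
  @ContinuousLinearMap.toNormedAddCommGroup ℝ ℝ E (E →L[ℝ] E →L[ℝ] ℝ) _ _ _ _ _ _ (RingHom.id ℝ) _
noncomputable instance instNS3 : NormedSpace ℝ (E →L[ℝ] E →L[ℝ] E →L[ℝ] ℝ) :=
  @ContinuousLinearMap.toNormedSpace ℝ ℝ E (E →L[ℝ] E →L[ℝ] ℝ) _ _ _ _ _ _ (RingHom.id ℝ) _ ℝ _ _ _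
noncomputable instance instNACGPhi :
    NormedAddCommGroup ((E →L[ℝ] E) →L[ℝ] (E →L[ℝ] ℝ) →L[ℝ] E →L[ℝ] ℝ) :=
  @ContinuousLinearMap.toNormedAddCommGroup ℝ ℝ (E →L[ℝ] E) ((E →L[ℝ] ℝ) →L[ℝ] E →L[ℝ] ℝ)
    _ _ _ _ _ _ (RingHom.id ℝ) _
noncomputable instance instNSPhi :
    NormedSpace ℝ ((E →L[ℝ] E) →L[ℝ] (E →L[ℝ] ℝ) →L[ℝ] E →L[ℝ] ℝ) :=
  @ContinuousLinearMap.toNormedSpace ℝ ℝ (E →L[ℝ] E) ((E →L[ℝ] ℝ) →L[ℝ] E →L[ℝ] ℝ)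
    _ _ _ _ _ _ (RingHom.id ℝ) _ ℝ _ _ _

lemma lor_nondeg {B : E →L[ℝ] E →L[ℝ] ℝ}
    (hB : IsLorentzianForm B)
    {v : E} (hv : v ≠ 0) : ∃ n, B v n ≠ 0 := by
  obtain ⟨b, hb⟩ := hB
  by_contra h
  push_neg at h
  apply hv
  have hrepr : ∀ j, b.repr v j = 0 := by
    intro j
    have := h (b j)
    rw [← b.sum_repr v] at this
    simp only [map_sum, map_smul, ContinuousLinearMap.coe_sum', Finset.sum_apply,
      ContinuousLinearMap.smul_apply, smul_eq_mul] at this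
    rw [Finset.sum_eq_single j] at this
    · rw [hb, if_pos rfl] at this
      rcases mul_eq_zero.1 this with h' | h'
      · exact h'
      · split_ifs at h' <;> norm_num at h'
    · intro i _ hij
      rw [hb]
      simp [hij]
    · intro hj; exact absurd (Finset.mem_univ j) hj
  have : b.repr v = 0 := Finsupp.ext hrepr
  simpa using congrArg b.repr.symm this


lemma fderiv_eval {T : E → (E →L[ℝ] E →L[ℝ] ℝ)} {x : E}
    (hT : DifferentiableAt ℝ T x) (u v w : E) :
    fderiv ℝ (fun y => T y u v) x w = fderiv ℝ T x w u v := by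
  set e : (E →L[ℝ] E →L[ℝ] ℝ) →L[ℝ] ℝ :=
    (ContinuousLinearMap.apply ℝ ℝ v).comp (ContinuousLinearMap.apply ℝ (E →L[ℝ] ℝ) u) with he
  have h1 : (fun y => T y u v) = ⇑e ∘ T := rfl
  rw [((hT.hasFDerivAt.clm_apply (hasFDerivAt_const u x)).clm_apply
    (hasFDerivAt_const v x)).fderiv]
  simp

lemma lieDerivSym_apply (V : E → E) (T : E → (E →L[ℝ] E →L[ℝ] ℝ)) (x u v : E) :
    lieDerivSym V T x u v
      = fderiv ℝ T x (V x) u v + T x (fderiv ℝ V x u) v + T x u (fderiv ℝ V x v) := by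
  simp [lieDerivSym, ContinuousLinearMap.add_apply, ContinuousLinearMap.comp_apply,
    ContinuousLinearMap.flip_apply, ContinuousLinearMap.compL_apply]

lemma lieDerivSym_diff (hg : ContDiff ℝ (⊤ : ℕ∞) g) (hW : ContDiff ℝ (⊤ : ℕ∞) W) :
    Differentiable ℝ (fun y => lieDerivSym W g y) := by
  intro x
  have hgd := hg.differentiable (by simp)
  have hg'd := (hg.fderiv_right (m := (⊤ : ℕ∞)) (by simp)).differentiable (by simp)
  have hWd := hW.differentiable (by simp)
  have hW'd := (hW.fderiv_right (m := (⊤ : ℕ∞)) (by simp)).differentiable (by simp)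
  have hB1 := ((hg'd x).hasFDerivAt).clm_apply ((hWd x).hasFDerivAt)
  have hB2 := ((hgd x).hasFDerivAt).clm_comp ((hW'd x).hasFDerivAt)
  have hPhiW : HasFDerivAt (fun S : E →L[ℝ] E => (compL ℝ E E ℝ).flip S)
      ((compL ℝ E E ℝ).flip) (fderiv ℝ W x) :=
    ContinuousLinearMap.hasFDerivAt (𝕜 := ℝ) (E := E →L[ℝ] E)
      (F := (E →L[ℝ] ℝ) →L[ℝ] E →L[ℝ] ℝ) (f := (compL ℝ E E ℝ).flip) (x := fderiv ℝ W x)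
  have hB3c : HasFDerivAt (fun y => (compL ℝ E E ℝ).flip (fderiv ℝ W y))
      (((compL ℝ E E ℝ).flip).comp (fderiv ℝ (fderiv ℝ W) x)) x := by
    exact hPhiW.comp (F := E →L[ℝ] E) (G := (E →L[ℝ] ℝ) →L[ℝ] E →L[ℝ] ℝ) x ((hW'd x).hasFDerivAt)
  have hB3 := hB3c.clm_comp ((hgd x).hasFDerivAt)
  exact ((hB1.add hB2).add hB3).differentiableAt

lemma lieDerivSym_symm (hgd : Differentiable ℝ g)
    (hsymm : ∀ y u v, g y u v = g y v u) (V : E → E) (x u v : E) :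
    lieDerivSym V g x u v = lieDerivSym V g x v u := by
  rw [lieDerivSym_apply, lieDerivSym_apply]
  have h1 : fderiv ℝ g x (V x) u v = fderiv ℝ g x (V x) v u := by
    rw [← fderiv_eval (hgd x) u v (V x), ← fderiv_eval (hgd x) v u (V x)]
    have : (fun y => g y u v) = fun y => g y v u := funext fun y => hsymm y u v
    rw [this]
  rw [h1, hsymm x (fderiv ℝ V x u) v, hsymm x u (fderiv ℝ V x v)]
  ring

/-- pointwise structure of a nilpotent-type form -/
lemma struct_pt {B : E →L[ℝ] E →L[ℝ] ℝ} {ξ : E →L[ℝ] ℝ}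
    (hBsym : ∀ u v, B u v = B v u)
    (h0 : ∀ w v, ξ w = 0 → B w v = 0) (u v m : E) :
    B u v * (ξ m * ξ m) = B m m * (ξ u * ξ v) := by
  by_cases hm : ξ m = 0
  · rw [hm, h0 m m hm]
    ring
  · have key : ∀ a c : E, B a c * ξ m = B m c * ξ a := by
      intro a c
      have hw : ξ (ξ m • a - ξ a • m) = 0 := by
        simp only [map_sub, map_smul, smul_eq_mul]
        ring
      have h := h0 _ c hw
      simp only [map_sub, map_smul, ContinuousLinearMap.sub_apply,
        ContinuousLinearMap.smul_apply, smul_eq_mul] at h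
      linarith
    have k1 := key u v
    have k2 := key v m
    have k3 : B v m = B m v := hBsym v m
    have k4 : B m v = B v m := hBsym m v
    -- B u v * (ξ m * ξ m) = (B u v * ξ m) * ξ m = (B m v * ξ u) * ξ m
    --   = ξ u * (B v m * ξ m) = ξ u * (B m m * ξ v)
    calc B u v * (ξ m * ξ m) = (B u v * ξ m) * ξ m := by ring
      _ = (B m v * ξ u) * ξ m := by rw [k1]
      _ = ξ u * (B v m * ξ m) := by rw [k4]; ring
      _ = ξ u * (B m m * ξ v) := by rw [k2]
      _ = B m m * (ξ u * ξ v) := by ring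

lemma deriv_gl (hgd : Differentiable ℝ g) (hld : Differentiable ℝ l) (x w u : E) :
    fderiv ℝ (fun y => g y (l y) u) x w
      = fderiv ℝ g x w (l x) u + g x (fderiv ℝ l x w) u := by
  have h1 := ((hgd x).hasFDerivAt).clm_apply ((hld x).hasFDerivAt)
  have h2 := h1.clm_apply (hasFDerivAt_const u x)
  rw [h2.fderiv]
  simp [ContinuousLinearMap.add_apply, ContinuousLinearMap.comp_apply,
    ContinuousLinearMap.flip_apply]
  ring

lemma deriv_gll (hgd : Differentiable ℝ g) (hld : Differentiable ℝ l) (x w : E) :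
    fderiv ℝ (fun y => g y (l y) (l y)) x w
      = fderiv ℝ g x w (l x) (l x) + g x (fderiv ℝ l x w) (l x)
        + g x (l x) (fderiv ℝ l x w) := by
  have h1 := ((hgd x).hasFDerivAt).clm_apply ((hld x).hasFDerivAt)
  have h2 := h1.clm_apply ((hld x).hasFDerivAt)
  rw [h2.fderiv]
  simp [ContinuousLinearMap.add_apply, ContinuousLinearMap.comp_apply,
    ContinuousLinearMap.flip_apply]
  ring

lemma deriv_mul3 {f p q : E → ℝ} {x : E} (w : E) (hf : DifferentiableAt ℝ f x)
    (hp : DifferentiableAt ℝ p x) (hq : DifferentiableAt ℝ q x) :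
    fderiv ℝ (fun y => f y * (p y * q y)) x w
      = fderiv ℝ f x w * (p x * q x)
        + f x * (fderiv ℝ p x w * q x + p x * fderiv ℝ q x w) := by
  rw [fderiv_fun_mul hf (hp.fun_mul hq)]
  simp only [ContinuousLinearMap.add_apply, ContinuousLinearMap.smul_apply, smul_eq_mul]
  rw [fderiv_fun_mul hp hq]
  simp only [ContinuousLinearMap.add_apply, ContinuousLinearMap.smul_apply, smul_eq_mul]
  ring



set_option maxHeartbeats 1000000 in
lemma aux_vanish (hg : ContDiff ℝ (⊤ : ℕ∞) g)
    (hg_symm : ∀ (x v w : E), g x v w = g x w v)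
    (hl : ContDiff ℝ (⊤ : ℕ∞) l)
    (hl_null : ∀ x : E, g x (l x) (l x) = 0)
    (hV : ContDiff ℝ (⊤ : ℕ∞) V) (hW : ContDiff ℝ (⊤ : ℕ∞) W)
    (hV_ord2 : ∀ (x v w : E), g x (l x) w = 0 → lieDerivSym V g x w v = 0)
    (hW_ord2 : ∀ (x v w : E), g x (l x) w = 0 → lieDerivSym W g x w v = 0)
    (x n : E) (hn : g x (l x) n ≠ 0) :
    (∀ z, lieDerivSym V (fun y => lieDerivSym W g y) x (l x) z = 0) ∧
    (∀ w w' : E, g x (l x) w = 0 → g x (l x) w' = 0 →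
      lieDerivSym V (fun y => lieDerivSym W g y) x w w' = 0) := by
  have hgd := hg.differentiable (by simp)
  have hld := hl.differentiable (by simp)
  have hVd := hV.differentiable (by simp)
  have hBd : Differentiable ℝ (fun y => lieDerivSym W g y) := lieDerivSym_diff hg hW
  set B := fun y => lieDerivSym W g y with hBdef
  have hBsym : ∀ y u v, B y u v = B y v u := fun y u v =>
    lieDerivSym_symm hgd hg_symm W y u v
  have hB0 : ∀ y w v, g y (l y) w = 0 → B y w v = 0 := fun y w v h => hW_ord2 y v w h
  have hB0' : ∀ y v w, g y (l y) w = 0 → B y v w = 0 := fun y v w h =>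
    (hBsym y v w).trans (hB0 y w v h)
  have hstruct : ∀ y u v, B y u v * (g y (l y) n * g y (l y) n)
      = B y n n * (g y (l y) u * g y (l y) v) := fun y u v =>
    struct_pt (fun a c => hBsym y a c) (fun w v h => hB0 y w v h) u v n
  have hζd : ∀ u : E, Differentiable ℝ (fun y => g y (l y) u) := fun u =>
    (hgd.clm_apply hld).clm_apply (differentiable_const u)
  have hφd : ∀ u v : E, Differentiable ℝ (fun y => B y u v) := fun u v =>
    (hBd.clm_apply (differentiable_const u)).clm_apply (differentiable_const v)
  have key : ∀ u v : E,
      fderiv ℝ (fun y => B y u v) x (V x) * (g x (l x) n * g x (l x) n)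
        + B x u v * (fderiv ℝ (fun y => g y (l y) n) x (V x) * g x (l x) n
            + g x (l x) n * fderiv ℝ (fun y => g y (l y) n) x (V x))
      = fderiv ℝ (fun y => B y n n) x (V x) * (g x (l x) u * g x (l x) v)
        + B x n n * (fderiv ℝ (fun y => g y (l y) u) x (V x) * g x (l x) v
            + g x (l x) u * fderiv ℝ (fun y => g y (l y) v) x (V x)) := by
    intro u v
    have hfun : (fun y => B y u v * (g y (l y) n * g y (l y) n))
        = fun y => B y n n * (g y (l y) u * g y (l y) v) := funext fun y => hstruct y u v
    have hd := congrArg (fun f : E → ℝ => fderiv ℝ f x (V x)) hfun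
    rw [deriv_mul3 (V x) ((hφd u v) x) ((hζd n) x) ((hζd n) x),
        deriv_mul3 (V x) ((hφd n n) x) ((hζd u) x) ((hζd v) x)] at hd
    exact hd
  have hnn : g x (l x) n * g x (l x) n ≠ 0 := mul_ne_zero hn hn
  constructor
  · -- evaluation at (l x, z)
    intro z
    have hlnull := hl_null x
    rw [lieDerivSym_apply]
    have h3 : B x (l x) (fderiv ℝ V x z) = 0 := hB0 x (l x) _ hlnull
    have h2 : B x (fderiv ℝ V x (l x)) z * (g x (l x) n * g x (l x) n)
        = B x n n * (g x (l x) (fderiv ℝ V x (l x)) * g x (l x) z) := hstruct x _ z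
    have k := key (l x) z
    rw [fderiv_eval (hBd x) (l x) z (V x)] at k
    simp only [hB0 x (l x) z hlnull, hlnull, zero_mul, mul_zero, zero_add, add_zero] at k
    rw [deriv_gl hgd hld x (V x) (l x)] at k
    have hz2 : fderiv ℝ (fun y => g y (l y) (l y)) x (V x) = 0 := by
      have he : (fun y => g y (l y) (l y)) = fun _ => (0 : ℝ) := funext fun y => hl_null y
      rw [he, fderiv_const_apply]
      simp
    rw [deriv_gll hgd hld x (V x)] at hz2
    have hVll := hV_ord2 x (l x) (l x) hlnull
    rw [lieDerivSym_apply] at hVll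
    have hs1 : g x (fderiv ℝ l x (V x)) (l x) = g x (l x) (fderiv ℝ l x (V x)) :=
      hg_symm x _ _
    have hs2 : g x (fderiv ℝ V x (l x)) (l x) = g x (l x) (fderiv ℝ V x (l x)) :=
      hg_symm x _ _
    rw [hs1] at k hz2
    rw [hs2] at hVll
    have hz : (fderiv ℝ B x (V x) (l x) z + B x (fderiv ℝ V x (l x)) z)
        * (g x (l x) n * g x (l x) n) = 0 := by
      linear_combination k + h2 + (B x n n * g x (l x) z / 2) * hz2
        + (B x n n * g x (l x) z / 2) * hVll
    have h12 : fderiv ℝ B x (V x) (l x) z + B x (fderiv ℝ V x (l x)) z = 0 :=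
      (mul_eq_zero.mp hz).resolve_right hnn
    rw [h3]
    linarith
  · -- evaluation at (w, w')
    intro w w' hw hw'
    rw [lieDerivSym_apply]
    have h3 : B x w (fderiv ℝ V x w') = 0 := hB0 x w _ hw
    have h2 : B x (fderiv ℝ V x w) w' = 0 := hB0' x _ w' hw'
    have k := key w w'
    rw [fderiv_eval (hBd x) w w' (V x)] at k
    simp only [hw, hw', hB0 x w w' hw, zero_mul, mul_zero, zero_add, add_zero] at k
    have h1 : fderiv ℝ B x (V x) w w' = 0 := (mul_eq_zero.mp k).resolve_right hnn
    rw [h1, h2, h3]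
    ring


set_option maxHeartbeats 1000000 in
lemma lie_comm (hg : ContDiff ℝ (⊤ : ℕ∞) g) (hX : ContDiff ℝ (⊤ : ℕ∞) X) (hY : ContDiff ℝ (⊤ : ℕ∞) Y) (x : E) :
    lieDerivSym (vfLieBracket X Y) g x
      = lieDerivSym X (fun y => lieDerivSym Y g y) x
        - lieDerivSym Y (fun y => lieDerivSym X g y) x := by
  have hgd := hg.differentiable (by simp)
  have hg'c := hg.fderiv_right (m := (⊤ : ℕ∞)) (by simp)
  have hg'd := hg'c.differentiable (by simp)
  have hXd := hX.differentiable (by simp)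
  have hX'c : ContDiff ℝ (⊤ : ℕ∞) (fderiv ℝ X) := hX.fderiv_right (by simp)
  have hX'd := hX'c.differentiable (by simp)
  have hYd := hY.differentiable (by simp)
  have hY'c : ContDiff ℝ (⊤ : ℕ∞) (fderiv ℝ Y) := hY.fderiv_right (by simp)
  have hY'd := hY'c.differentiable (by simp)
  -- derivative of lieDerivSym Y g
  have hB1 := ((hg'd x).hasFDerivAt).clm_apply ((hYd x).hasFDerivAt)
  have hB2 := ((hgd x).hasFDerivAt).clm_comp ((hY'd x).hasFDerivAt)
  have hPhiY : HasFDerivAt (fun S : E →L[ℝ] E => (compL ℝ E E ℝ).flip S)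
      ((compL ℝ E E ℝ).flip) (fderiv ℝ Y x) :=
    ContinuousLinearMap.hasFDerivAt (𝕜 := ℝ) (E := E →L[ℝ] E)
      (F := (E →L[ℝ] ℝ) →L[ℝ] E →L[ℝ] ℝ) (f := (compL ℝ E E ℝ).flip) (x := fderiv ℝ Y x)
  have hB3c : HasFDerivAt (fun y => (compL ℝ E E ℝ).flip (fderiv ℝ Y y))
      (((compL ℝ E E ℝ).flip).comp (fderiv ℝ (fderiv ℝ Y) x)) x := by
    exact hPhiY.comp (F := E →L[ℝ] E) (G := (E →L[ℝ] ℝ) →L[ℝ] E →L[ℝ] ℝ) x ((hY'd x).hasFDerivAt)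
  have hB3 := hB3c.clm_comp ((hgd x).hasFDerivAt)
  have hB := (hB1.fun_add hB2).fun_add hB3
  -- derivative of lieDerivSym X g
  have hA1 := ((hg'd x).hasFDerivAt).clm_apply ((hXd x).hasFDerivAt)
  have hA2 := ((hgd x).hasFDerivAt).clm_comp ((hX'd x).hasFDerivAt)
  have hPhiX : HasFDerivAt (fun S : E →L[ℝ] E => (compL ℝ E E ℝ).flip S)
      ((compL ℝ E E ℝ).flip) (fderiv ℝ X x) :=
    ContinuousLinearMap.hasFDerivAt (𝕜 := ℝ) (E := E →L[ℝ] E)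
      (F := (E →L[ℝ] ℝ) →L[ℝ] E →L[ℝ] ℝ) (f := (compL ℝ E E ℝ).flip) (x := fderiv ℝ X x)
  have hA3c : HasFDerivAt (fun y => (compL ℝ E E ℝ).flip (fderiv ℝ X y))
      (((compL ℝ E E ℝ).flip).comp (fderiv ℝ (fderiv ℝ X) x)) x := by
    exact hPhiX.comp (F := E →L[ℝ] E) (G := (E →L[ℝ] ℝ) →L[ℝ] E →L[ℝ] ℝ) x ((hX'd x).hasFDerivAt)
  have hA3 := hA3c.clm_comp ((hgd x).hasFDerivAt)
  have hA := (hA1.fun_add hA2).fun_add hA3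
  -- derivative of the bracket
  have hZ : HasFDerivAt (vfLieBracket X Y)
      (((fderiv ℝ Y x).comp (fderiv ℝ X x) + (fderiv ℝ (fderiv ℝ Y) x).flip (X x))
        - ((fderiv ℝ X x).comp (fderiv ℝ Y x) + (fderiv ℝ (fderiv ℝ X) x).flip (Y x))) x :=
    (((hY'd x).hasFDerivAt).clm_apply ((hXd x).hasFDerivAt)).sub
      (((hX'd x).hasFDerivAt).clm_apply ((hYd x).hasFDerivAt))
  -- symmetry of second derivatives
  have sg : ∀ a b : E, fderiv ℝ (fderiv ℝ g) x a b = fderiv ℝ (fderiv ℝ g) x b a :=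
    fun a b => second_derivative_symmetric (fun y => (hgd y).hasFDerivAt)
      ((hg'd x).hasFDerivAt) a b
  have sX : ∀ a b : E, fderiv ℝ (fderiv ℝ X) x a b = fderiv ℝ (fderiv ℝ X) x b a :=
    fun a b => second_derivative_symmetric (fun y => (hXd y).hasFDerivAt)
      ((hX'd x).hasFDerivAt) a b
  have sY : ∀ a b : E, fderiv ℝ (fderiv ℝ Y) x a b = fderiv ℝ (fderiv ℝ Y) x b a :=
    fun a b => second_derivative_symmetric (fun y => (hYd y).hasFDerivAt)
      ((hY'd x).hasFDerivAt) a b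
  simp only [lieDerivSym]
  rw [hZ.fderiv, hB.fderiv, hA.fderiv, vfLieBracket]
  ext u v
  simp only [ContinuousLinearMap.add_apply, ContinuousLinearMap.coe_comp', Function.comp_apply,
    ContinuousLinearMap.coe_sub', Pi.sub_apply, ContinuousLinearMap.sub_apply,
    ContinuousLinearMap.flip_apply, ContinuousLinearMap.compL_apply, map_sub, map_add,
    ContinuousLinearMap.comp_apply]
  rw [sg (X x) (Y x), sY u (X x), sY v (X x), sX u (Y x), sX v (Y x)]
  ring

end myaux

/-- If `X, Y` are nil-Killing with respect to the null vector field `l` of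
order two, i.e. `(L_X g)_x(w, v) = 0 = (L_Y g)_x(w, v)` for every `x`, every `v`, and every
`w ⊥ l x`, then `[X,Y]` is nil-Killing with respect to `l`. -/
theorem stmt18 [NormedAddCommGroup E] [NormedSpace ℝ E] [FiniteDimensional ℝ E]
    (g : E → (E →L[ℝ] E →L[ℝ] ℝ)) (hg : ContDiff ℝ (⊤ : ℕ∞) g)
    (hg_symm : ∀ (x v w : E), g x v w = g x w v)
    (hg_lor : ∀ x : E, IsLorentzianForm (g x))
    (l : E → E) (hl : ContDiff ℝ (⊤ : ℕ∞) l)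
    (hl_null : ∀ x : E, l x ≠ 0 ∧ g x (l x) (l x) = 0)
    (X Y : E → E) (hX : ContDiff ℝ (⊤ : ℕ∞) X) (hY : ContDiff ℝ (⊤ : ℕ∞) Y)
    (hX_ord2 : ∀ (x v w : E), g x (l x) w = 0 → lieDerivSym X g x w v = 0)
    (hY_ord2 : ∀ (x v w : E), g x (l x) w = 0 → lieDerivSym Y g x w v = 0) :
    ∀ x : E, NilpotentWrt (g x) (lieDerivSym (vfLieBracket X Y) g x) (l x) := by
  intro x
  have hnull' : ∀ y, g y (l y) (l y) = 0 := fun y => (hl_null y).2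
  obtain ⟨n, hn⟩ := lor_nondeg (hg_lor x) (hl_null x).1
  have hXY := aux_vanish hg hg_symm hl hnull' hX hY hX_ord2 hY_ord2 x n hn
  have hYX := aux_vanish hg hg_symm hl hnull' hY hX hY_ord2 hX_ord2 x n hn
  have hcomm := lie_comm hg hX hY x
  refine ⟨fun z => ?_, fun w w' hw hw' => ?_⟩
  · rw [hcomm]
    simp [ContinuousLinearMap.sub_apply, hXY.1 z, hYX.1 z]
  · rw [hcomm]
    simp [ContinuousLinearMap.sub_apply, hXY.2 w w' hw hw', hYX.2 w w' hw hw']
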